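/- arXiv:1306.6399 — 4 statements merged into one kernel-verified Lean document; each statement's English description precedes it below -/
import Mathlib

section
/- Let 𝔽 be ℝ or ℂ, let D ∈ 𝔽^{d×n} be a matrix of full row rank (a dictionary) and A ∈ 𝔽^{m×d}. Then the following are equivalent: (a) there exists a map Δ : 𝔽^m → 𝔽^d such that Δ(A z₀) = z₀ for every z₀ ∈ DΣ_s; (b) ker A ∩ DΣ_{2s} = {0}; (c) for every z₀ ∈ DΣ_s, every minimizer x̂ of min ‖x‖₀ subject to A D x = A z₀ satisfies D x̂ = z₀; (d) rank(D_T) = rank(A D_T) for every index set T ⊆ {1,…,n} with |T| ≤ 2s. -/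
open scoped BigOperators

section Defs

variable {𝕜 : Type*}

/-- ℓ¹ norm of a finitely-indexed vector. -/
noncomputable def norm1 [RCLike 𝕜] {ι : Type*} [Fintype ι] (x : ι → 𝕜) : ℝ :=
  ∑ i, ‖x i‖

/-- ℓ² norm of a finitely-indexed vector. -/
noncomputable def norm2 [RCLike 𝕜] {ι : Type*} [Fintype ι] (x : ι → 𝕜) : ℝ :=
  Real.sqrt (∑ i, ‖x i‖ ^ 2)

/-- Restriction of a vector to an index set `T` (zero outside `T`). -/
def restr [Zero 𝕜] {ι : Type*} [DecidableEq ι] (T : Finset ι) (x : ι → 𝕜) : ι → 𝕜 :=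
  fun i => if i ∈ T then x i else 0

/-- `x` has at most `s` nonzero entries. -/
def sparse [Zero 𝕜] {ι : Type*} (s : ℕ) (x : ι → 𝕜) : Prop :=
  {i | x i ≠ 0}.ncard ≤ s

/-- Null space property of order `s`. -/
def NSP [RCLike 𝕜] {m : ℕ} {ι : Type*} [Fintype ι] [DecidableEq ι]
    (M : Matrix (Fin m) ι 𝕜) (s : ℕ) : Prop :=
  ∀ v : ι → 𝕜, M.mulVec v = 0 → v ≠ 0 →
    ∀ T : Finset ι, T.card ≤ s → norm1 (restr T v) < norm1 (restr Tᶜ v)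

/-- `D`-null space property of order `s`. -/
def DNSP [RCLike 𝕜] {m d : ℕ} {ι : Type*} [Fintype ι] [DecidableEq ι]
    (A : Matrix (Fin m) (Fin d) 𝕜) (D : Matrix (Fin d) ι 𝕜) (s : ℕ) : Prop :=
  ∀ T : Finset ι, T.card ≤ s →
    ∀ v : ι → 𝕜, A.mulVec (D.mulVec v) = 0 → D.mulVec v ≠ 0 →
      ∃ u : ι → 𝕜, D.mulVec u = 0 ∧ norm1 (restr T v + u) < norm1 (restr Tᶜ v)

/-- Strong `D`-null space property of order `s` with constant `c`. -/
def SNSPc [RCLike 𝕜] {m d : ℕ} {ι : Type*} [Fintype ι] [DecidableEq ι]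
    (A : Matrix (Fin m) (Fin d) 𝕜) (D : Matrix (Fin d) ι 𝕜) (s : ℕ) (c : ℝ) : Prop :=
  ∀ v : ι → 𝕜, A.mulVec (D.mulVec v) = 0 →
    ∀ T : Finset ι, T.card ≤ s →
      ∃ u : ι → 𝕜, D.mulVec u = 0 ∧
        c * norm2 (D.mulVec v) ≤ norm1 (restr Tᶜ v) - norm1 (restr T v + u)

/-- Smallest positive singular value of a matrix: the infimum of the set of positive `σ`
such that `σ²` is an eigenvalue of `Mᴴ M`. -/
noncomputable def nuSV [RCLike 𝕜] {κ ι : Type*} [Fintype κ] [Fintype ι]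
    (M : Matrix κ ι 𝕜) : ℝ :=
  sInf {σ : ℝ | 0 < σ ∧ ∃ v : ι → 𝕜, v ≠ 0 ∧ (M.conjTranspose * M).mulVec v = ((σ : 𝕜) ^ 2) • v}

/-- ℓ¹ error of the best `s`-term approximation. -/
noncomputable def sigmaS [RCLike 𝕜] {ι : Type*} [Fintype ι] (s : ℕ) (x : ι → 𝕜) : ℝ :=
  sInf {r : ℝ | ∃ v : ι → 𝕜, sparse s v ∧ r = norm1 (x - v)}

/-- Spectral norm (ℓ² → ℓ² operator norm). -/
noncomputable def specNorm [RCLike 𝕜] {m d : ℕ} (A : Matrix (Fin m) (Fin d) 𝕜) : ℝ :=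
  sSup {r : ℝ | ∃ x : Fin d → 𝕜, norm2 x ≤ 1 ∧ r = norm2 (A.mulVec x)}

/-- ℓ¹ → ℓ² operator norm: the maximal ℓ² norm of a column. -/
noncomputable def norm12 [RCLike 𝕜] {d : ℕ} {ι : Type*} [Fintype ι]
    (M : Matrix (Fin d) ι 𝕜) : ℝ :=
  sSup {r : ℝ | ∃ j : ι, r = norm2 (fun i => M i j)}

end Defs


section Helpers
variable {𝕜 : Type*} [RCLike 𝕜] {m d n : ℕ}

/-- extension of a vector on a finset by zero -/
def extT (T : Finset (Fin n)) (v : {j // j ∈ T} → 𝕜) : Fin n → 𝕜 :=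
  fun j => if h : j ∈ T then v ⟨j, h⟩ else 0

lemma mulVec_submatrix (D : Matrix (Fin d) (Fin n) 𝕜) (T : Finset (Fin n))
    (v : {j // j ∈ T} → 𝕜) :
    (D.submatrix id (fun j : {j // j ∈ T} => (j : Fin n))).mulVec v
      = D.mulVec (extT T v) := by
  ext i
  simp only [Matrix.mulVec, dotProduct, Matrix.submatrix_apply, id]
  rw [← Finset.sum_subset (Finset.subset_univ T)
    (fun j _ hj => by simp [extT, hj])]
  rw [← Finset.sum_attach T (fun j => D i j * extT T v j)]
  rw [← Finset.univ_eq_attach]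
  refine Finset.sum_congr rfl fun j _ => ?_
  simp [extT, j.2]

lemma ncard_le_card {α : Type*} (y : α → 𝕜) (T : Finset α)
    (h : ∀ i, y i ≠ 0 → i ∈ T) : {i | y i ≠ 0}.ncard ≤ T.card := by
  refine le_trans (Set.ncard_le_ncard (fun i (hi : i ∈ {i | y i ≠ 0}) =>
    Finset.mem_coe.2 (h i hi)) T.finite_toSet) (le_of_eq (Set.ncard_coe_finset T))

lemma sparse_extT (s : ℕ) (T : Finset (Fin n)) (hT : T.card ≤ s)
    (v : {j // j ∈ T} → 𝕜) : sparse s (extT T v) := by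
  refine le_trans (ncard_le_card _ T fun j hj => ?_) hT
  by_contra hjT
  exact hj (dif_neg hjT)

lemma ncard_sub_le (x y : Fin n → 𝕜) :
    {i | (x - y) i ≠ 0}.ncard ≤ {i | x i ≠ 0}.ncard + {i | y i ≠ 0}.ncard := by
  refine le_trans (Set.ncard_le_ncard ?_ ((Set.toFinite _).union (Set.toFinite _)))
    (Set.ncard_union_le _ _)
  intro i hi
  by_contra h
  simp only [Set.mem_union, Set.mem_setOf_eq, not_or, not_not] at h
  simp only [Set.mem_setOf_eq, Pi.sub_apply, h.1, h.2, sub_zero, ne_eq, not_true] at hi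

lemma exists_split (s : ℕ) (x : Fin n → 𝕜) (hx : sparse (2 * s) x) :
    ∃ x₁ x₂ : Fin n → 𝕜, sparse s x₁ ∧ sparse s x₂ ∧ x = x₁ - x₂ := by
  classical
  set S := (Set.toFinite {i | x i ≠ 0}).toFinset with hS
  have hScard : S.card ≤ 2 * s := by
    rwa [← Set.ncard_eq_toFinset_card {i | x i ≠ 0} (Set.toFinite _)]
  obtain ⟨T, hTS, hTcard⟩ := Finset.exists_subset_card_eq (min_le_right s S.card)
  have hT1 : T.card ≤ s := le_trans (le_of_eq hTcard) (min_le_left _ _)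
  have hT2 : S.card - T.card ≤ s := by
    rcases le_total s S.card with h | h
    · rw [hTcard, min_eq_left h]; omega
    · rw [hTcard, min_eq_right h]; omega
  refine ⟨restr T x, restr T x - x, ?_, ?_, by ring⟩
  · have h1 : {i | restr T x i ≠ 0}.ncard ≤ T.card := by
      refine ncard_le_card _ T fun j hj => ?_
      by_contra hjT
      exact hj (if_neg hjT)
    exact le_trans h1 hT1
  · have h1 : {i | (restr T x - x) i ≠ 0}.ncard ≤ (S \ T).card := by
      refine ncard_le_card _ _ fun j hj => ?_
      simp only [Pi.sub_apply, restr] at hj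
      by_cases hjT : j ∈ T
      · simp [hjT] at hj
      · simp only [if_neg hjT, zero_sub, ne_eq, neg_eq_zero] at hj
        simp only [Finset.mem_sdiff, hjT, not_false_iff, and_true, hS,
          Set.Finite.mem_toFinset, Set.mem_setOf_eq]
        exact hj
    rw [Finset.card_sdiff_of_subset hTS] at h1
    exact le_trans h1 hT2

lemma exists_min {α : Type*} [Fintype α] (P : (α → 𝕜) → Prop) (h : ∃ x, P x) :
    ∃ x, P x ∧ ∀ y, P y → {i | x i ≠ 0}.ncard ≤ {i | y i ≠ 0}.ncard := by
  obtain ⟨x0, hx0⟩ := h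
  have hS : ((fun x : α → 𝕜 => {i | x i ≠ 0}.ncard) '' {x | P x}).Nonempty :=
    ⟨_, x0, hx0, rfl⟩
  obtain ⟨x, hx, hxe⟩ := Nat.sInf_mem hS
  refine ⟨x, hx, fun y hy => ?_⟩
  calc {i | x i ≠ 0}.ncard = sInf _ := hxe
    _ ≤ {i | y i ≠ 0}.ncard := Nat.sInf_le ⟨y, hy, rfl⟩

lemma rank_eq_of_ker_eq {k : Type*} [Fintype k] [DecidableEq k]
    {M : Matrix (Fin m) k 𝕜} {N : Matrix (Fin d) k 𝕜}
    (h : LinearMap.ker M.mulVecLin = LinearMap.ker N.mulVecLin) :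
    M.rank = N.rank := by
  have h1 := LinearMap.finrank_range_add_finrank_ker M.mulVecLin
  have h2 := LinearMap.finrank_range_add_finrank_ker N.mulVecLin
  rw [h] at h1
  rw [Matrix.rank, Matrix.rank]
  omega

end Helpers

/-- equivalence of basic recovery conditions for `ℓ₀`-minimization. -/
theorem stmt0 {𝕜 : Type*} [RCLike 𝕜] {m d n s : ℕ}
    (A : Matrix (Fin m) (Fin d) 𝕜) (D : Matrix (Fin d) (Fin n) 𝕜)
    (hD : Function.Surjective D.mulVec) :
    List.TFAE
      [ -- (a) existence of a decoder
        (∃ Δ : (Fin m → 𝕜) → (Fin d → 𝕜),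
          ∀ x₀ : Fin n → 𝕜, sparse s x₀ → Δ (A.mulVec (D.mulVec x₀)) = D.mulVec x₀),
        -- (b) ker A ∩ DΣ_{2s} = {0}
        (∀ x : Fin n → 𝕜, sparse (2 * s) x → A.mulVec (D.mulVec x) = 0 → D.mulVec x = 0),
        -- (c) every ℓ₀-minimizer recovers the signal
        (∀ x₀ : Fin n → 𝕜, sparse s x₀ →
          ∀ x' : Fin n → 𝕜,
            A.mulVec (D.mulVec x') = A.mulVec (D.mulVec x₀) →
            (∀ x : Fin n → 𝕜, A.mulVec (D.mulVec x) = A.mulVec (D.mulVec x₀) →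
              {i | x' i ≠ 0}.ncard ≤ {i | x i ≠ 0}.ncard) →
            D.mulVec x' = D.mulVec x₀),
        -- (d) rank D_T = rank (A D)_T for all |T| ≤ 2s
        (∀ T : Finset (Fin n), T.card ≤ 2 * s →
          (D.submatrix id (fun j : {j // j ∈ T} => (j : Fin n))).rank =
            ((A * D).submatrix id (fun j : {j // j ∈ T} => (j : Fin n))).rank) ] := by
  classical
  tfae_have 1 → 2 := by
    rintro ⟨Δ, hΔ⟩ x hx hAx
    obtain ⟨x₁, x₂, h1, h2, rfl⟩ := exists_split s x hx
    rw [Matrix.mulVec_sub, Matrix.mulVec_sub, sub_eq_zero] at hAx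
    rw [Matrix.mulVec_sub, sub_eq_zero, ← hΔ x₁ h1, ← hΔ x₂ h2, hAx]
  tfae_have 2 → 3 := by
    intro h2 x₀ hx₀ x' hfeas hmin
    have hs' : sparse (2 * s) (x' - x₀) := by
      have hle := ncard_sub_le x' x₀
      have hm := hmin x₀ rfl
      unfold sparse at hx₀ ⊢
      omega
    have hzero : A.mulVec (D.mulVec (x' - x₀)) = 0 := by
      rw [Matrix.mulVec_sub, Matrix.mulVec_sub, hfeas, sub_self]
    have := h2 _ hs' hzero
    rwa [Matrix.mulVec_sub, sub_eq_zero] at this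
  tfae_have 3 → 1 := by
    intro h3
    refine ⟨fun y => if h : ∃ x, A.mulVec (D.mulVec x) = y then
        D.mulVec (exists_min (fun x => A.mulVec (D.mulVec x) = y) h).choose else 0, ?_⟩
    intro x₀ hx₀
    have hex : ∃ x, A.mulVec (D.mulVec x) = A.mulVec (D.mulVec x₀) := ⟨x₀, rfl⟩
    beta_reduce
    rw [dif_pos hex]
    obtain ⟨hfeas, hmin⟩ := (exists_min
      (fun x => A.mulVec (D.mulVec x) = A.mulVec (D.mulVec x₀)) ⟨x₀, rfl⟩).choose_spec
    exact h3 x₀ hx₀ _ hfeas hmin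
  tfae_have 2 → 4 := by
    intro h2 T hT
    refine rank_eq_of_ker_eq ?_ |>.symm
    ext v
    simp only [LinearMap.mem_ker, Matrix.mulVecLin_apply]
    rw [mulVec_submatrix, mulVec_submatrix, ← Matrix.mulVec_mulVec]
    constructor
    · intro h
      exact h2 _ (sparse_extT (2 * s) T hT v) h
    · intro h
      rw [h, Matrix.mulVec_zero]
  tfae_have 4 → 2 := by
    intro h4 x hx hAx
    set T := (Set.toFinite {i | x i ≠ 0}).toFinset with hT
    have hTcard : T.card ≤ 2 * s := by
      rwa [← Set.ncard_eq_toFinset_card _ (Set.toFinite _)]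
    set v : {j // j ∈ T} → 𝕜 := fun j => x j with hv
    have hext : extT T v = x := by
      funext j
      by_cases h : j ∈ T
      · simp [extT, h, hv]
      · simp only [extT, dif_neg h]
        have hj : ¬ x j ≠ 0 := by simpa [hT, Set.Finite.mem_toFinset] using h
        exact (not_not.1 hj).symm
    have hker_le : LinearMap.ker (D.submatrix id
          (fun j : {j // j ∈ T} => (j : Fin n))).mulVecLin ≤
        LinearMap.ker ((A * D).submatrix id
          (fun j : {j // j ∈ T} => (j : Fin n))).mulVecLin := by
      intro w hw
      simp only [LinearMap.mem_ker, Matrix.mulVecLin_apply] at hw ⊢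
      rw [mulVec_submatrix] at hw ⊢
      rw [← Matrix.mulVec_mulVec, hw, Matrix.mulVec_zero]
    have hker_eq : LinearMap.ker (D.submatrix id
          (fun j : {j // j ∈ T} => (j : Fin n))).mulVecLin =
        LinearMap.ker ((A * D).submatrix id
          (fun j : {j // j ∈ T} => (j : Fin n))).mulVecLin := by
      refine Submodule.eq_of_le_of_finrank_eq hker_le ?_
      have hr := h4 T hTcard
      have e1 := LinearMap.finrank_range_add_finrank_ker
        (D.submatrix id (fun j : {j // j ∈ T} => (j : Fin n))).mulVecLin
      have e2 := LinearMap.finrank_range_add_finrank_ker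
        ((A * D).submatrix id (fun j : {j // j ∈ T} => (j : Fin n))).mulVecLin
      rw [Matrix.rank, Matrix.rank] at hr
      omega
    have hv_mem : v ∈ LinearMap.ker ((A * D).submatrix id
        (fun j : {j // j ∈ T} => (j : Fin n))).mulVecLin := by
      simp only [LinearMap.mem_ker, Matrix.mulVecLin_apply]
      rw [mulVec_submatrix, hext, ← Matrix.mulVec_mulVec]
      exact hAx
    rw [← hker_eq] at hv_mem
    simp only [LinearMap.mem_ker, Matrix.mulVecLin_apply] at hv_mem
    rwa [mulVec_submatrix, hext] at hv_mem
  tfae_finish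
end

section
/- Let 𝔽 be ℝ or ℂ, let D ∈ 𝔽^{d×n} be a dictionary of full row rank and A ∈ 𝔽^{m×d}. Then A satisfies the D-null space property of order s if and only if for every z₀ ∈ DΣ_s and every minimizer x̂ of min ‖x‖₁ subject to A D x = A z₀, one has D x̂ = z₀ (i.e., the ℓ₁-synthesis method exactly recovers every s-sparse-in-D signal from its noiseless measurements). -/
open scoped BigOperators

section Aux

variable {𝕜 : Type*} [RCLike 𝕜] {ι : Type*} [Fintype ι]

lemma norm1_nonneg (x : ι → 𝕜) : 0 ≤ norm1 x :=
  Finset.sum_nonneg fun _ _ => norm_nonneg _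

lemma norm1_neg (x : ι → 𝕜) : norm1 (-x) = norm1 x := by
  simp [norm1]

lemma norm1_add_le (x y : ι → 𝕜) : norm1 (x + y) ≤ norm1 x + norm1 y := by
  rw [norm1, norm1, norm1, ← Finset.sum_add_distrib]
  exact Finset.sum_le_sum fun i _ => norm_add_le _ _

lemma norm1_split [DecidableEq ι] (T : Finset ι) (x : ι → 𝕜) :
    norm1 x = norm1 (restr T x) + norm1 (restr Tᶜ x) := by
  rw [norm1, norm1, norm1, ← Finset.sum_add_distrib]
  refine Finset.sum_congr rfl fun i _ => ?_
  by_cases h : i ∈ T <;> simp [restr, h]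

lemma norm1_continuous : Continuous (norm1 : (ι → 𝕜) → ℝ) :=
  continuous_finset_sum _ fun i _ => (continuous_apply i).norm

lemma restr_add_restr_compl [DecidableEq ι] (T : Finset ι) (x : ι → 𝕜) :
    restr T x + restr Tᶜ x = x := by
  funext i
  by_cases h : i ∈ T <;> simp [restr, h]

lemma exists_minimizer {m d n : ℕ} (A : Matrix (Fin m) (Fin d) 𝕜)
    (D : Matrix (Fin d) (Fin n) 𝕜) (x₀ : Fin n → 𝕜) :
    ∃ x' : Fin n → 𝕜, A.mulVec (D.mulVec x') = A.mulVec (D.mulVec x₀) ∧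
      ∀ x, A.mulVec (D.mulVec x) = A.mulVec (D.mulVec x₀) → norm1 x' ≤ norm1 x := by
  set b := A.mulVec (D.mulVec x₀) with hb
  set f : (Fin n → 𝕜) → (Fin m → 𝕜) := fun x => A.mulVec (D.mulVec x) with hf
  have hfc : Continuous f := by
    have : f = fun x => (A.mulVecLin.comp D.mulVecLin) x := by
      funext x; simp [hf]
    rw [this]
    exact (A.mulVecLin.comp D.mulVecLin).continuous_of_finiteDimensional
  set K : Set (Fin n → 𝕜) := f ⁻¹' {b} ∩ {x | norm1 x ≤ norm1 x₀} with hK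
  have hKne : x₀ ∈ K := ⟨rfl, show norm1 x₀ ≤ norm1 x₀ from le_rfl⟩
  have hKcl : IsClosed K :=
    (isClosed_singleton.preimage hfc).inter (isClosed_le norm1_continuous continuous_const)
  have hKbd : Bornology.IsBounded K := by
    rw [Metric.isBounded_iff_subset_closedBall 0]
    refine ⟨norm1 x₀, fun x hx => ?_⟩
    have h1 : norm1 x ≤ norm1 x₀ := hx.2
    rw [Metric.mem_closedBall, dist_zero_right]
    refine (pi_norm_le_iff_of_nonneg ((norm1_nonneg x).trans h1)).2 fun i => ?_
    refine le_trans ?_ h1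
    exact Finset.single_le_sum (f := fun j => ‖x j‖) (fun j _ => norm_nonneg _)
      (Finset.mem_univ i)
  have hKcp : IsCompact K := Metric.isCompact_of_isClosed_isBounded hKcl hKbd
  obtain ⟨x', hx'K, hmin⟩ := hKcp.exists_isMinOn ⟨x₀, hKne⟩ norm1_continuous.continuousOn
  refine ⟨x', hx'K.1, fun x hx => ?_⟩
  by_cases h : norm1 x ≤ norm1 x₀
  · exact hmin ⟨hx, h⟩
  · exact le_trans (hmin hKne) (le_of_not_ge h)

end Aux

/-- `s`-`D`-NSP characterizes exact recovery of all `D`-sparse signals by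
the ℓ₁-synthesis method from noiseless measurements. -/
theorem stmt1 {𝕜 : Type*} [RCLike 𝕜] {m d n s : ℕ}
    (A : Matrix (Fin m) (Fin d) 𝕜) (D : Matrix (Fin d) (Fin n) 𝕜)
    (hD : Function.Surjective D.mulVec) :
    DNSP A D s ↔
      ∀ x₀ : Fin n → 𝕜, sparse s x₀ →
        ∀ x' : Fin n → 𝕜,
          A.mulVec (D.mulVec x') = A.mulVec (D.mulVec x₀) →
          (∀ x : Fin n → 𝕜, A.mulVec (D.mulVec x) = A.mulVec (D.mulVec x₀) →
            norm1 x' ≤ norm1 x) →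
          D.mulVec x' = D.mulVec x₀ := by
  classical
  constructor
  · intro hNSP x₀ hx₀ x' hfeas hmin
    by_contra hne
    set v := x₀ - x' with hv
    have hDv' : D.mulVec v = D.mulVec x₀ - D.mulVec x' := by
      rw [hv, Matrix.mulVec_sub]
    have hAv : A.mulVec (D.mulVec v) = 0 := by
      rw [hDv', Matrix.mulVec_sub, hfeas, sub_self]
    have hDv : D.mulVec v ≠ 0 := by
      intro h
      rw [hDv', sub_eq_zero] at h
      exact hne h.symm
    set T : Finset (Fin n) := {i | x₀ i ≠ 0}.toFinset with hTdef
    have hT : T.card ≤ s := by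
      have h := hx₀
      rwa [sparse, Set.ncard_eq_toFinset_card'] at h
    obtain ⟨u, hu, hlt⟩ := hNSP T hT v hAv hDv
    have hmemT : ∀ i, i ∈ T ↔ x₀ i ≠ 0 := fun i => by
      rw [hTdef, Set.mem_toFinset]; rfl
    have hx₀T : restr T x₀ = x₀ := by
      funext i
      by_cases h : x₀ i = 0 <;> simp [restr, hmemT, h]
    have hx₀Tc : restr Tᶜ x₀ = 0 := by
      funext i
      by_cases h : x₀ i = 0 <;> simp [restr, Finset.mem_compl, hmemT, h]
    have hdecomp : x₀ + u = restr T x' + (restr T v + u) := by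
      funext i
      by_cases h : i ∈ T
      · simp only [restr, hv, if_pos h, Pi.add_apply, Pi.sub_apply]
        ring
      · have h0 : x₀ i = 0 := by
          by_contra hc; exact h ((hmemT i).2 hc)
        simp [restr, h, h0]
    have hfeas2 : A.mulVec (D.mulVec (x₀ + u)) = A.mulVec (D.mulVec x₀) := by
      rw [Matrix.mulVec_add, hu, add_zero]
    have h1 : norm1 x' ≤ norm1 (x₀ + u) := hmin _ hfeas2
    have h2 : norm1 (x₀ + u) ≤ norm1 (restr T x') + norm1 (restr T v + u) := by
      rw [hdecomp]; exact norm1_add_le _ _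
    have h3 : restr Tᶜ v = -restr Tᶜ x' := by
      funext i
      by_cases h : i ∈ Tᶜ
      · have h0 : x₀ i = 0 := by
          by_contra hc
          exact (Finset.mem_compl.1 h) ((hmemT i).2 hc)
        simp [restr, h, hv, h0]
      · simp [restr, h]
    have h4 : norm1 (restr Tᶜ v) = norm1 (restr Tᶜ x') := by
      rw [h3, norm1_neg]
    have h5 : norm1 x' = norm1 (restr T x') + norm1 (restr Tᶜ x') :=
      norm1_split T x'
    linarith
  · intro hrec T hT v hAv hDv
    set x₀ := restr T v with hx₀
    have hsp : sparse s x₀ := by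
      refine le_trans ?_ hT
      have hsub : {i | x₀ i ≠ 0} ⊆ (T : Set (Fin n)) := by
        intro i hi
        by_contra h
        have h' : i ∉ T := fun hh => h (Finset.mem_coe.2 hh)
        exact hi (by simp [hx₀, restr, h'])
      calc {i | x₀ i ≠ 0}.ncard ≤ (T : Set (Fin n)).ncard :=
            Set.ncard_le_ncard hsub (Set.toFinite _)
        _ = T.card := Set.ncard_coe_finset T
    obtain ⟨xh, hfeas, hmin⟩ := exists_minimizer A D x₀
    have hDxh : D.mulVec xh = D.mulVec x₀ := hrec x₀ hsp xh hfeas hmin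
    set x₁ := -restr Tᶜ v with hx₁
    have hsum : x₀ + restr Tᶜ v = v := restr_add_restr_compl T v
    have hDx₁ : D.mulVec x₀ - D.mulVec x₁ = D.mulVec v := by
      rw [hx₁, Matrix.mulVec_neg, sub_neg_eq_add, ← Matrix.mulVec_add, hsum]
    have hfeas1 : A.mulVec (D.mulVec x₁) = A.mulVec (D.mulVec x₀) := by
      have : D.mulVec x₁ = D.mulVec x₀ - D.mulVec v := by
        rw [← hDx₁]; ring
      rw [this, Matrix.mulVec_sub, hAv, sub_zero]
    have hx₁nm : ¬ (∀ x, A.mulVec (D.mulVec x) = A.mulVec (D.mulVec x₀) →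
        norm1 x₁ ≤ norm1 x) := by
      intro hmin1
      have hD1 : D.mulVec x₁ = D.mulVec x₀ := hrec x₀ hsp x₁ hfeas1 hmin1
      apply hDv
      rw [← hDx₁, hD1, sub_self]
    push_neg at hx₁nm
    obtain ⟨x, hxfeas, hxlt⟩ := hx₁nm
    refine ⟨xh - x₀, ?_, ?_⟩
    · rw [Matrix.mulVec_sub, hDxh, sub_self]
    · have heq : restr T v + (xh - x₀) = xh := by
        rw [← hx₀]; ring
      rw [heq]
      calc norm1 xh ≤ norm1 x := hmin x hxfeas
        _ < norm1 x₁ := hxlt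
        _ = norm1 (restr Tᶜ v) := by rw [hx₁, norm1_neg]
end

section
/- Let 𝔽 be ℝ or ℂ. Suppose D = [B, v] ∈ 𝔽^{d×n}, where B is a full-rank d×(n−1) matrix and v = B a for some a ∈ 𝔽^{n−1} with ‖a‖₁ ≤ 1. If A ∈ 𝔽^{m×d} satisfies the D-null space property of order s, then A satisfies the B-null space property of the same order s. -/
open scoped BigOperators

/-- if `D = [B, v]` with `v = B a`, `‖a‖₁ ≤ 1`, and `A` has `s`-`D`-NSP,
then `A` has `s`-`B`-NSP. -/
theorem stmt2 {𝕜 : Type*} [RCLike 𝕜] {m d n s : ℕ}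
    (A : Matrix (Fin m) (Fin d) 𝕜) (B : Matrix (Fin d) (Fin n) 𝕜)
    (hB : Function.Surjective B.mulVec)
    (a : Fin n → 𝕜) (ha : norm1 a ≤ 1)
    (D : Matrix (Fin d) (Fin (n + 1)) 𝕜)
    (hDdef : D = Matrix.of fun i => Fin.snoc (fun j => B i j) (B.mulVec a i))
    (hDNSP : DNSP A D s) :
    DNSP A B s := by
  intro T hT w hAw hw
  set emb : Fin n ↪ Fin (n + 1) := ⟨Fin.castSucc, Fin.castSucc_injective n⟩ with hemb
  set v' : Fin (n + 1) → 𝕜 := Fin.snoc w 0 with hv'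
  have hDv' : D.mulVec v' = B.mulVec w := by
    funext i
    simp only [Matrix.mulVec, dotProduct, hDdef, Matrix.of_apply]
    rw [Fin.sum_univ_castSucc]
    simp [hv']
  have hT' : (T.map emb).card ≤ s := by simpa using hT
  obtain ⟨u, hu0, hlt⟩ := hDNSP (T.map emb) hT' v'
    (by rw [hDv']; exact hAw) (by rw [hDv']; exact hw)
  set c : 𝕜 := u (Fin.last n) with hc
  set u₁ : Fin n → 𝕜 := fun j => u (Fin.castSucc j) with hu₁
  refine ⟨u₁ + c • a, ?_, ?_⟩
  · funext i
    have h := congrFun hu0 i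
    simp only [Matrix.mulVec, dotProduct, hDdef, Matrix.of_apply] at h
    rw [Fin.sum_univ_castSucc] at h
    simp only [Fin.snoc_castSucc, Fin.snoc_last] at h
    simp only [Matrix.mulVec, dotProduct, Pi.add_apply, Pi.smul_apply, Pi.zero_apply,
      smul_eq_mul, mul_add, Finset.sum_add_distrib] at h ⊢
    have : ∑ j, B i j * (c * a j) = c * ∑ j, B i j * a j := by
      rw [Finset.mul_sum]; exact Finset.sum_congr rfl fun j _ => by ring
    rw [this]
    have h2 : (∑ j, B i j * a j) * c = c * ∑ j, B i j * a j := mul_comm _ _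
    linear_combination h
  · -- membership facts
    have hmem : ∀ j : Fin n, (Fin.castSucc j ∈ T.map emb) ↔ j ∈ T := by
      intro j
      constructor
      · intro hj
        obtain ⟨x, hx, hxe⟩ := Finset.mem_map.mp hj
        have : x = j := Fin.castSucc_injective n hxe
        rwa [← this]
      · intro hj; exact Finset.mem_map_of_mem emb hj
    have hlast : Fin.last n ∉ T.map emb := by
      intro h
      obtain ⟨x, _, hxe⟩ := Finset.mem_map.mp h
      exact absurd hxe (ne_of_lt (Fin.castSucc_lt_last x))
    -- RHS equality
    have hR : norm1 (restr (T.map emb)ᶜ v') = norm1 (restr Tᶜ w) := by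
      unfold norm1
      rw [Fin.sum_univ_castSucc]
      have h1 : restr (T.map emb)ᶜ v' (Fin.last n) = 0 := by
        simp [restr, hv', Finset.mem_compl, hlast]
      rw [h1]
      simp only [norm_zero, add_zero]
      refine Finset.sum_congr rfl fun j _ => ?_
      simp [restr, hv', Finset.mem_compl, hmem j]
    -- LHS equality
    have hL : norm1 (restr (T.map emb) v' + u)
        = (∑ j, ‖restr T w j + u₁ j‖) + ‖c‖ := by
      unfold norm1
      rw [Fin.sum_univ_castSucc]
      have h1 : (restr (T.map emb) v' + u) (Fin.last n) = c := by
        simp [restr, hv', hlast, hc]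
      rw [h1]
      congr 1
      refine Finset.sum_congr rfl fun j _ => ?_
      by_cases hj : j ∈ T <;>
        simp [restr, hv', hmem j, hj, hu₁]
    have htriangle : norm1 (restr T w + (u₁ + c • a))
        ≤ (∑ j, ‖restr T w j + u₁ j‖) + ‖c‖ := by
      unfold norm1
      calc ∑ j, ‖(restr T w + (u₁ + c • a)) j‖
          ≤ ∑ j, (‖restr T w j + u₁ j‖ + ‖c‖ * ‖a j‖) := by
            refine Finset.sum_le_sum fun j _ => ?_
            calc ‖(restr T w + (u₁ + c • a)) j‖
                = ‖(restr T w j + u₁ j) + c * a j‖ := by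
                  simp only [Pi.add_apply, Pi.smul_apply, smul_eq_mul]; ring_nf
              _ ≤ ‖restr T w j + u₁ j‖ + ‖c * a j‖ := norm_add_le _ _
              _ = ‖restr T w j + u₁ j‖ + ‖c‖ * ‖a j‖ := by rw [norm_mul]
        _ = (∑ j, ‖restr T w j + u₁ j‖) + ‖c‖ * norm1 a := by
            rw [Finset.sum_add_distrib, ← Finset.mul_sum]; rfl
        _ ≤ (∑ j, ‖restr T w j + u₁ j‖) + ‖c‖ := by
            have := mul_le_of_le_one_right (norm_nonneg c) ha
            linarith
    calc norm1 (restr T w + (u₁ + c • a))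
        ≤ (∑ j, ‖restr T w j + u₁ j‖) + ‖c‖ := htriangle
      _ = norm1 (restr (T.map emb) v' + u) := hL.symm
      _ < norm1 (restr (T.map emb)ᶜ v') := hlt
      _ = norm1 (restr Tᶜ w) := hR
end

section
/- Let 𝔽 be ℝ or ℂ, let D ∈ 𝔽^{d×n} be a dictionary of full row rank and A ∈ 𝔽^{m×d}. Suppose A satisfies the strong D-null space property of order s with constant c > 0. Let z₀ = D x₀ for some x₀ ∈ 𝔽^n, let y = A z₀ + w with ‖w‖₂ ≤ ε, and let x̂ be any minimizer of min ‖x‖₁ subject to ‖A D x − y‖₂ ≤ ε, with ẑ = D x̂. Then ‖ẑ − z₀‖₂ ≤ (2/c)·σ_s(x₀) + ε·( 2√n/(c·ν_A·ν_D) + 2/ν_A ), where ν_A and ν_D are the smallest positive singular values of A and D respectively. -/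
open scoped BigOperators

/-!
Write `z = D x' - D x₀`. Since `x'` and `x₀` are both feasible, `‖A z‖₂ ≤ 2ε`. Keeping only the
eigencoordinates of `z` for the nonzero eigenvalues of `AᴴA` gives `z₁` with `A z₁ = A z` and
`‖z₁‖₂ ≤ 2ε / ν_A`; by surjectivity of `D` and the same construction for `D` there is `v₁` with
`D v₁ = z₁` and `‖v₁‖₂ ≤ ‖z₁‖₂ / ν_D`, hence `‖v₁‖₁ ≤ √n ‖v₁‖₂`. Then `v = x' - x₀ - v₁` lies in
`ker (A D)`, and since `x₀ - u` is feasible for every `u ∈ ker D`, minimality of `x'` gives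
`‖x₀ + v‖₁ ≤ ‖x₀ - u‖₁ + ‖v₁‖₁`. Playing this off against the strong null space property on the
support `T` of an `s`-sparse `g` yields `c ‖D v‖₂ ≤ 2 ‖x₀ - g‖₁ + ‖v₁‖₁`, hence
`c ‖D v‖₂ ≤ 2 σ_s(x₀) + ‖v₁‖₁`; finally `‖z‖₂ ≤ ‖D v‖₂ + ‖z₁‖₂`.
-/

open Matrix

section

variable {𝕜 : Type*} [RCLike 𝕜]

section Norms

variable {ι : Type*} [Fintype ι]

lemma norm2_eq_norm_toLp (x : ι → 𝕜) : norm2 x = ‖WithLp.toLp 2 x‖ := by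
  rw [EuclideanSpace.norm_eq, norm2]

lemma norm2_nonneg (x : ι → 𝕜) : 0 ≤ norm2 x := Real.sqrt_nonneg _

lemma norm2_sq (x : ι → 𝕜) : norm2 x ^ 2 = ∑ i, ‖x i‖ ^ 2 :=
  Real.sq_sqrt (Finset.sum_nonneg fun _ _ => sq_nonneg _)

lemma norm2_eq_zero_iff {x : ι → 𝕜} : norm2 x = 0 ↔ x = 0 := by
  rw [norm2_eq_norm_toLp, norm_eq_zero, WithLp.toLp_eq_zero]

lemma norm2_add_le (x y : ι → 𝕜) : norm2 (x + y) ≤ norm2 x + norm2 y := by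
  simpa only [norm2_eq_norm_toLp, WithLp.toLp_add] using norm_add_le _ _

lemma norm2_neg (x : ι → 𝕜) : norm2 (-x) = norm2 x := by
  simp [norm2]

lemma norm1_le_sqrt_card_mul_norm2 (x : ι → 𝕜) :
    norm1 x ≤ Real.sqrt (Fintype.card ι) * norm2 x := by
  rw [norm2, ← Real.sqrt_mul (Nat.cast_nonneg _)]
  refine Real.le_sqrt_of_sq_le ?_
  simpa [norm1] using sq_sum_le_card_mul_sum_sq (s := Finset.univ) (f := fun i => ‖x i‖)

lemma norm2_mulVec_sq {κ : Type*} [Fintype κ] (M : Matrix κ ι 𝕜) (x : ι → 𝕜) :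
    norm2 (M *ᵥ x) ^ 2 = RCLike.re (star x ⬝ᵥ (Mᴴ * M) *ᵥ x) := by
  rw [norm2_sq, ← mulVec_mulVec, dotProduct_mulVec, ← star_mulVec, dotProduct, map_sum]
  refine Finset.sum_congr rfl fun i _ => ?_
  rw [Pi.star_apply, RCLike.star_def, RCLike.conj_mul, ← RCLike.ofReal_pow, RCLike.ofReal_re]

end Norms

section SmallestSingularValue

variable {κ ι : Type*} [Fintype κ] [Fintype ι] (M : Matrix κ ι 𝕜)

local notation "μ" => Matrix.IsHermitian.eigenvalues (isHermitian_conjTranspose_mul_self M)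
local notation "U" =>
  (Matrix.IsHermitian.eigenvectorUnitary (isHermitian_conjTranspose_mul_self M) : Matrix ι ι 𝕜)

lemma nuSV_nonneg : 0 ≤ nuSV M :=
  Real.sInf_nonneg fun _ hσ => hσ.1.le

section Spectral

variable [DecidableEq ι]

lemma norm2_mulVec_eigenvectorUnitary_mulVec_sq (x : ι → 𝕜) :
    norm2 (M *ᵥ U *ᵥ x) ^ 2 = ∑ i, μ i * ‖x i‖ ^ 2 := by
  have hdiag := (isHermitian_conjTranspose_mul_self M).conjStarAlgAut_star_eigenvectorUnitary
  rw [Unitary.conjStarAlgAut_star_apply] at hdiag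
  rw [mulVec_mulVec, norm2_mulVec_sq, conjTranspose_mul, ← Matrix.mul_assoc,
    Matrix.mul_assoc _ Mᴴ, ← star_eq_conjTranspose, hdiag, dotProduct, map_sum]
  refine Finset.sum_congr rfl fun i _ => ?_
  rw [mulVec_diagonal, Pi.star_apply, RCLike.star_def, Function.comp_apply, mul_left_comm,
    RCLike.conj_mul, ← RCLike.ofReal_pow, ← RCLike.ofReal_mul, RCLike.ofReal_re]

lemma norm2_unitary_mulVec {V : Matrix ι ι 𝕜} (hV : V ∈ unitaryGroup ι 𝕜) (x : ι → 𝕜) :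
    norm2 (V *ᵥ x) = norm2 x := by
  have h := norm2_mulVec_sq (1 : Matrix ι ι 𝕜) x
  rw [conjTranspose_one, Matrix.one_mul, one_mulVec] at h
  rw [← sq_eq_sq₀ (norm2_nonneg _) (norm2_nonneg _), norm2_mulVec_sq, ← star_eq_conjTranspose,
    (mem_unitaryGroup_iff'.1 hV), one_mulVec, h]

lemma mulVec_eigenvectorBasis_eq_sqrt_sq_smul (i : ι) :
    (Mᴴ * M) *ᵥ ⇑((isHermitian_conjTranspose_mul_self M).eigenvectorBasis i) =
      ((√(μ i) : ℝ) : 𝕜) ^ 2 • ⇑((isHermitian_conjTranspose_mul_self M).eigenvectorBasis i) := by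
  rw [IsHermitian.mulVec_eigenvectorBasis, ← RCLike.ofReal_pow,
    Real.sq_sqrt (eigenvalues_conjTranspose_mul_self_nonneg M i),
    RCLike.real_smul_eq_coe_smul (K := 𝕜)]

lemma eigenvectorBasis_ne_zero (i : ι) :
    ⇑((isHermitian_conjTranspose_mul_self M).eigenvectorBasis i) ≠ 0 :=
  (WithLp.ofLp_eq_zero 2).ne.2
    ((isHermitian_conjTranspose_mul_self M).eigenvectorBasis.orthonormal.ne_zero i)

lemma nuSV_sq_le_eigenvalue {i : ι} (hi : μ i ≠ 0) : nuSV M ^ 2 ≤ μ i := by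
  have hpos : 0 < μ i := (eigenvalues_conjTranspose_mul_self_nonneg M i).lt_of_ne' hi
  have hle : nuSV M ≤ √(μ i) := csInf_le ⟨0, fun _ hσ => hσ.1.le⟩
    ⟨Real.sqrt_pos.2 hpos, _, eigenvectorBasis_ne_zero M i,
      mulVec_eigenvectorBasis_eq_sqrt_sq_smul M i⟩
  calc nuSV M ^ 2 ≤ √(μ i) ^ 2 := pow_le_pow_left₀ (nuSV_nonneg M) hle 2
    _ = μ i := Real.sq_sqrt hpos.le

lemma sq_mem_range_eigenvalues {σ : ℝ} {v : ι → 𝕜} (hv : v ≠ 0)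
    (h : (Mᴴ * M) *ᵥ v = ((σ : 𝕜) ^ 2) • v) : σ ^ 2 ∈ Set.range μ := by
  have hspec : ((σ ^ 2 : ℝ) : 𝕜) ∈ spectrum 𝕜 (Mᴴ * M) := by
    rw [← spectrum_toLin']
    refine Module.End.HasEigenvalue.mem_spectrum (Module.End.hasEigenvalue_of_hasEigenvector
      ⟨Module.End.mem_eigenspace_iff.2 ?_, hv⟩)
    rw [toLin'_apply, h, RCLike.ofReal_pow]
  rw [(isHermitian_conjTranspose_mul_self M).spectrum_eq_image_range] at hspec
  obtain ⟨_, ⟨i, rfl⟩, hi⟩ := hspec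
  exact ⟨i, RCLike.ofReal_injective hi⟩

end Spectral

open scoped ComplexOrder in
lemma nuSV_pos (hM : M ≠ 0) : 0 < nuSV M := by
  classical
  set S := {σ : ℝ | 0 < σ ∧ ∃ v : ι → 𝕜, v ≠ 0 ∧ (Mᴴ * M) *ᵥ v = ((σ : 𝕜) ^ 2) • v}
  have hS : S ⊆ Real.sqrt '' Set.range μ := by
    rintro σ ⟨hσ, v, hv, h⟩
    exact ⟨σ ^ 2, sq_mem_range_eigenvalues M hv h, Real.sqrt_sq hσ.le⟩
  obtain ⟨i, hi⟩ : ∃ i, μ i ≠ 0 := Function.ne_iff.1 <|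
    (IsHermitian.eigenvalues_eq_zero_iff _).not.2 (conjTranspose_mul_self_eq_zero.not.2 hM)
  have hne : S.Nonempty := ⟨√(μ i), Real.sqrt_pos.2
    ((eigenvalues_conjTranspose_mul_self_nonneg M i).lt_of_ne' hi), _,
    eigenvectorBasis_ne_zero M i, mulVec_eigenvectorBasis_eq_sqrt_sq_smul M i⟩
  exact (hne.csInf_mem (((Set.finite_range _).image _).subset hS)).1

lemma exists_mulVec_eq_and_nuSV_mul_norm2_le (v₀ : ι → 𝕜) :
    ∃ v, M *ᵥ v = M *ᵥ v₀ ∧ nuSV M * norm2 v ≤ norm2 (M *ᵥ v) := by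
  classical
  -- `U *ᵥ c'` is the orthogonal projection of `v₀` onto `(ker M)ᗮ`.
  set c := star U *ᵥ v₀
  set c' : ι → 𝕜 := fun i => if μ i = 0 then 0 else c i
  have hU := (Matrix.IsHermitian.eigenvectorUnitary (isHermitian_conjTranspose_mul_self M)).2
  refine ⟨U *ᵥ c', ?_, ?_⟩
  · have hker : M *ᵥ U *ᵥ (c - c') = 0 := by
      rw [← norm2_eq_zero_iff, ← pow_eq_zero_iff two_ne_zero,
        norm2_mulVec_eigenvectorUnitary_mulVec_sq]
      refine Finset.sum_eq_zero fun i _ => ?_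
      by_cases h : μ i = 0 <;> simp [c', h]
    have hv₀ : v₀ = U *ᵥ c := by
      rw [mulVec_mulVec, mem_unitaryGroup_iff.1 hU, one_mulVec]
    rw [mulVec_sub, mulVec_sub, sub_eq_zero] at hker
    rw [hv₀, hker]
  · rw [← sq_le_sq₀ (mul_nonneg (nuSV_nonneg M) (norm2_nonneg _)) (norm2_nonneg _), mul_pow,
      norm2_unitary_mulVec hU, norm2_sq, norm2_mulVec_eigenvectorUnitary_mulVec_sq, Finset.mul_sum]
    refine Finset.sum_le_sum fun i _ => ?_
    by_cases h : μ i = 0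
    · simp [c', h]
    · exact mul_le_mul_of_nonneg_right (nuSV_sq_le_eigenvalue M h) (sq_nonneg _)

end SmallestSingularValue

-- For `M = 0` the division by `nuSV M = 0` makes the bound `norm2 v ≤ 0`, met by `v = 0`.
lemma exists_mulVec_eq_and_norm2_le_div {κ ι : Type*} [Fintype κ] [Fintype ι]
    (M : Matrix κ ι 𝕜) (v₀ : ι → 𝕜) :
    ∃ v, M *ᵥ v = M *ᵥ v₀ ∧ norm2 v ≤ norm2 (M *ᵥ v₀) / nuSV M := by
  by_cases hM : M = 0
  · refine ⟨0, by simp [hM], ?_⟩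
    rw [norm2_eq_zero_iff.2 rfl]
    exact div_nonneg (norm2_nonneg _) (nuSV_nonneg M)
  · obtain ⟨v, hv, hle⟩ := exists_mulVec_eq_and_nuSV_mul_norm2_le M v₀
    refine ⟨v, hv, ?_⟩
    rw [← hv, le_div_iff₀ (nuSV_pos M hM), mul_comm]
    exact hle

lemma exists_mulVec_mulVec_eq_and_norm2_le_div {κ η ι : Type*} [Fintype κ] [Fintype η]
    [Fintype ι] (A : Matrix κ η 𝕜) {D : Matrix η ι 𝕜} (hD : Function.Surjective D.mulVec)
    (z : η → 𝕜) :
    ∃ v, A *ᵥ D *ᵥ v = A *ᵥ z ∧ norm2 (D *ᵥ v) ≤ norm2 (A *ᵥ z) / nuSV A ∧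
      norm2 v ≤ norm2 (A *ᵥ z) / nuSV A / nuSV D := by
  obtain ⟨z₁, hAz₁, hz₁⟩ := exists_mulVec_eq_and_norm2_le_div A z
  obtain ⟨p, rfl⟩ := hD z₁
  obtain ⟨v, hDv, hv⟩ := exists_mulVec_eq_and_norm2_le_div D p
  rw [← hDv] at hz₁ hAz₁ hv
  exact ⟨v, hAz₁, hz₁, hv.trans (div_le_div_of_nonneg_right hz₁ (nuSV_nonneg D))⟩

section NullSpaceProperty

variable {ι : Type*} [Fintype ι]

lemma norm1_sub_le (x y : ι → 𝕜) : norm1 (x - y) ≤ norm1 x + norm1 y := by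
  simp only [norm1, ← Finset.sum_add_distrib]
  exact Finset.sum_le_sum fun i _ => norm_sub_le _ _

lemma le_sigmaS {s : ℕ} {x : ι → 𝕜} {a : ℝ} (h : ∀ g, sparse s g → a ≤ norm1 (x - g)) :
    a ≤ sigmaS s x :=
  le_csInf ⟨_, 0, by simp [sparse], rfl⟩ (by rintro _ ⟨g, hg, rfl⟩; exact h g hg)

variable [DecidableEq ι]

lemma norm1_restr_compl_le_norm1_sub {T : Finset ι} {g : ι → 𝕜} (hg : ∀ i ∉ T, g i = 0)
    (x : ι → 𝕜) : norm1 (restr Tᶜ x) ≤ norm1 (x - g) := by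
  refine Finset.sum_le_sum fun i _ => ?_
  by_cases hi : i ∈ T <;> simp [restr, hi, hg]

lemma norm1_restr_compl_sub_norm1_restr_add_le (T : Finset ι) (x u v : ι → 𝕜) :
    norm1 (restr Tᶜ v) - norm1 (restr T v + u) ≤
      norm1 (x + v) - norm1 (x - u) + 2 * norm1 (restr Tᶜ x) := by
  simp only [norm1, ← Finset.sum_sub_distrib, Finset.mul_sum, ← Finset.sum_add_distrib]
  refine Finset.sum_le_sum fun i _ => ?_
  by_cases hi : i ∈ T
  · simp only [restr, Pi.add_apply, Pi.sub_apply, Finset.mem_compl, hi, not_true, if_true,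
      if_false, norm_zero]
    have := norm_sub_le (x i + v i) (v i + u i)
    rw [show x i + v i - (v i + u i) = x i - u i by ring] at this
    linarith
  · simp only [restr, Pi.add_apply, Pi.sub_apply, Finset.mem_compl, hi, not_false_eq_true,
      if_true, if_false, zero_add]
    have := norm_sub_le (x i + v i) (x i)
    rw [add_sub_cancel_left] at this
    linarith [norm_sub_le (x i) (u i)]

lemma SNSPc.mul_norm2_le {m d s : ℕ} {A : Matrix (Fin m) (Fin d) 𝕜} {D : Matrix (Fin d) ι 𝕜}
    {c : ℝ} (hA : SNSPc A D s c) {x v : ι → 𝕜} {r : ℝ} (hv : A *ᵥ D *ᵥ v = 0)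
    (hx : ∀ u, D *ᵥ u = 0 → norm1 (x + v) ≤ norm1 (x - u) + r) :
    c * norm2 (D *ᵥ v) ≤ 2 * sigmaS s x + r := by
  suffices ∀ g, sparse s g → (c * norm2 (D *ᵥ v) - r) / 2 ≤ norm1 (x - g) by
    linarith [le_sigmaS this]
  intro g hg
  obtain ⟨u, hu, hcone⟩ := hA v hv {i | g i ≠ 0}.toFinset
    (by rwa [sparse, Set.ncard_eq_toFinset_card'] at hg)
  linarith [hx u hu, norm1_restr_compl_sub_norm1_restr_add_le {i | g i ≠ 0}.toFinset x u v,
    norm1_restr_compl_le_norm1_sub (T := {i | g i ≠ 0}.toFinset) (g := g) (by simp) x]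

end NullSpaceProperty

end

/-- stability of ℓ₁-synthesis under the strong `D`-null space property. -/
theorem stmt4 {𝕜 : Type*} [RCLike 𝕜] {m d n s : ℕ}
    (A : Matrix (Fin m) (Fin d) 𝕜) (D : Matrix (Fin d) (Fin n) 𝕜)
    (hD : Function.Surjective D.mulVec)
    (c : ℝ) (hc : 0 < c) (hSNSP : SNSPc A D s c)
    (x₀ : Fin n → 𝕜) (w : Fin m → 𝕜) (ε : ℝ) (hw : norm2 w ≤ ε)
    (y : Fin m → 𝕜) (hy : y = A.mulVec (D.mulVec x₀) + w)
    (x' : Fin n → 𝕜)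
    (hfeas : norm2 (A.mulVec (D.mulVec x') - y) ≤ ε)
    (hmin : ∀ x : Fin n → 𝕜, norm2 (A.mulVec (D.mulVec x) - y) ≤ ε → norm1 x' ≤ norm1 x) :
    norm2 (D.mulVec x' - D.mulVec x₀) ≤
      (2 / c) * sigmaS s x₀ +
        ε * (2 * Real.sqrt n / (c * nuSV A * nuSV D) + 2 / nuSV A) := by
  set z := D *ᵥ x' - D *ᵥ x₀
  have hAz : norm2 (A *ᵥ z) ≤ 2 * ε := by
    calc norm2 (A *ᵥ z) = norm2 ((A *ᵥ D *ᵥ x' - y) + w) := by rw [mulVec_sub, hy]; abel_nf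
      _ ≤ norm2 (A *ᵥ D *ᵥ x' - y) + norm2 w := norm2_add_le _ _
      _ ≤ 2 * ε := by linarith
  obtain ⟨v₁, hAv₁, hDv₁, hv₁⟩ := exists_mulVec_mulVec_eq_and_norm2_le_div A hD z
  replace hDv₁ : norm2 (D *ᵥ v₁) ≤ 2 * ε / nuSV A :=
    hDv₁.trans (div_le_div_of_nonneg_right hAz (nuSV_nonneg A))
  have hDv : D *ᵥ (x' - x₀ - v₁) = z - D *ᵥ v₁ := by rw [mulVec_sub, mulVec_sub]
  have hcone := hSNSP.mul_norm2_le (x := x₀) (r := norm1 v₁)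
    (by rw [hDv, mulVec_sub, hAv₁, sub_self]) fun u hu => by
      have hfeas₀ : norm2 (A *ᵥ D *ᵥ (x₀ - u) - y) ≤ ε := by
        rwa [mulVec_sub, hu, sub_zero, hy, sub_add_cancel_left, norm2_neg]
      calc norm1 (x₀ + (x' - x₀ - v₁)) = norm1 (x' - v₁) := by congr 1; abel
        _ ≤ norm1 x' + norm1 v₁ := norm1_sub_le _ _
        _ ≤ norm1 (x₀ - u) + norm1 v₁ := by gcongr; exact hmin _ hfeas₀
  have hv₁_norm1 : norm1 v₁ ≤ √n * (2 * ε / nuSV A / nuSV D) := by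
    refine (norm1_le_sqrt_card_mul_norm2 v₁).trans ?_
    rw [Fintype.card_fin]
    gcongr
    exact hv₁.trans (div_le_div_of_nonneg_right
      (div_le_div_of_nonneg_right hAz (nuSV_nonneg A)) (nuSV_nonneg D))
  have hz : z = D *ᵥ (x' - x₀ - v₁) + D *ᵥ v₁ := by rw [hDv, sub_add_cancel]
  calc norm2 z ≤ norm2 (D *ᵥ (x' - x₀ - v₁)) + norm2 (D *ᵥ v₁) := hz ▸ norm2_add_le _ _
    _ ≤ (2 * sigmaS s x₀ + √n * (2 * ε / nuSV A / nuSV D)) / c + 2 * ε / nuSV A := by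
        gcongr
        rw [le_div_iff₀ hc, mul_comm]
        linarith
    _ = _ := by ring
end
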